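/- Let ν = (n₁,…,n_k) be a tuple of positive integers and let ℓ be an integer with ℓ ≥ (1/2)·max{n₁+1,…,n_k+1,k} and 2ℓ ≥ k+1. Then for all indices 1 ≤ i < j ≤ 2ℓk, the entry (B_{ν,ℓ})_{ij} is zero if and only if either (a) there exists j′ ∈ {1,…,k−1} with i = j′ and 2ℓj′ < j ≤ 2ℓ(j′+1), or (b) j = i+1 and there exists a ∈ {1,…,k} with i = 2ℓa−1 and n_a even. -/
import Mathlib


open Matrix

/-- Entry of the antisymmetric matrix `S_N` whose entries above the diagonal are all `1`
(indices are 0-based naturals). -/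
def SmatE (p q : ℕ) : ℤ := if p < q then 1 else if q < p then -1 else 0

/-- The vector `v_{n,ℓ} ∈ ℤ^{2ℓ-1}` (0-based index `p`). -/
def vvecE (n ℓ p : ℕ) : ℤ :=
  if p < n then (-1) ^ p
  else if p = 2 * ℓ - 2 ∧ Even n then 0
  else 1

/-- Entry of the 2ℓ×2ℓ block matrix `A_{n,ℓ} = [[S_{2ℓ-1}, v_{n,ℓ}], [-v_{n,ℓ}ᵀ, 0]]`
(0-based indices). -/
def AmatE (n ℓ p q : ℕ) : ℤ :=
  if p < 2 * ℓ - 1 then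
    (if q < 2 * ℓ - 1 then SmatE p q else vvecE n ℓ p)
  else
    (if q < 2 * ℓ - 1 then -(vvecE n ℓ q) else 0)

/-- The antisymmetric 2ℓ×2ℓ integer matrix `A_{n,ℓ}`. -/
def Amat (n ℓ : ℕ) : Matrix (Fin (2 * ℓ)) (Fin (2 * ℓ)) ℤ :=
  Matrix.of fun i j => AmatE n ℓ (i : ℕ) (j : ℕ)

/-- The antisymmetric `2ℓk × 2ℓk` matrix `B_{ν,ℓ}` for `ν = (ν 0, …, ν (k-1))`, defined
inductively: `B` for `k = 1` is `A_{ν 0, ℓ}`, and `B` for `k+1` is the block matrix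
`[[B_k, C],[-Cᵀ, A_{ν k, ℓ}]]` where each column of `C` equals the `k`-th column
(1-based; 0-based index `k-1`) of `B_k`. -/
def Bmat (ℓ : ℕ) (ν : ℕ → ℕ) : (k : ℕ) → Matrix (Fin (2 * ℓ * k)) (Fin (2 * ℓ * k)) ℤ
  | 0 => 0
  | k + 1 =>
    let B := Bmat ℓ ν k
    let C : Matrix (Fin (2 * ℓ * k)) (Fin (2 * ℓ)) ℤ :=
      Matrix.of fun i _ => if h : k - 1 < 2 * ℓ * k then B i ⟨k - 1, h⟩ else 0
    Matrix.reindex (finSumFinEquiv.trans (finCongr (by ring)))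
      (finSumFinEquiv.trans (finCongr (by ring)))
      (Matrix.fromBlocks B C (-Cᵀ) (Amat (ν k) ℓ))

def BmatE (ℓ : ℕ) (ν : ℕ → ℕ) (p q : ℕ) : ℤ :=
  if p / (2*ℓ) = q / (2*ℓ) then AmatE (ν (p / (2*ℓ))) ℓ (p % (2*ℓ)) (q % (2*ℓ))
  else if p / (2*ℓ) < q / (2*ℓ) then
    (if p < 2*ℓ then AmatE (ν 0) ℓ p (q / (2*ℓ) - 1) else 1)
  else
    (if q < 2*ℓ then -(AmatE (ν 0) ℓ q (p / (2*ℓ) - 1)) else -1)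

lemma SmatE_anti (p q : ℕ) : SmatE p q = -SmatE q p := by
  unfold SmatE; split_ifs <;> omega

lemma AmatE_anti (n ℓ p q : ℕ) : AmatE n ℓ p q = -AmatE n ℓ q p := by
  unfold AmatE; split_ifs <;> simp [SmatE_anti p q]

lemma BmatE_anti (ℓ : ℕ) (ν : ℕ → ℕ) (p q : ℕ) : BmatE ℓ ν p q = -BmatE ℓ ν q p := by
  unfold BmatE
  rcases lt_trichotomy (p / (2*ℓ)) (q / (2*ℓ)) with h | h | h
  · rw [if_neg (show ¬ p/(2*ℓ) = q/(2*ℓ) from h.ne), if_pos h,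
      if_neg (show ¬ q/(2*ℓ) = p/(2*ℓ) from h.ne'), if_neg (show ¬ q/(2*ℓ) < p/(2*ℓ) by omega)]
    split_ifs <;> ring
  · rw [if_pos h, if_pos h.symm, h, AmatE_anti]
  · rw [if_neg (show ¬ p/(2*ℓ) = q/(2*ℓ) from h.ne'), if_neg (show ¬ p/(2*ℓ) < q/(2*ℓ) by omega),
      if_neg (show ¬ q/(2*ℓ) = p/(2*ℓ) from h.ne), if_pos h]
    split_ifs <;> ring

lemma finsum_left {m n : ℕ} (x : Fin (m + n)) (h : (x : ℕ) < m) :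
    finSumFinEquiv.symm x = Sum.inl ⟨x, h⟩ := by
  rw [Equiv.symm_apply_eq]; exact Fin.ext rfl

lemma finsum_right {m n : ℕ} (x : Fin (m + n)) (h : m ≤ (x : ℕ)) :
    finSumFinEquiv.symm x = Sum.inr ⟨(x : ℕ) - m, by omega⟩ := by
  rw [Equiv.symm_apply_eq]; exact Fin.ext (by simp; omega)

lemma BmatE_diagblock (ℓ : ℕ) (ν : ℕ → ℕ) (k p q : ℕ) (hl : 0 < ℓ)
    (hp1 : 2*ℓ*k ≤ p) (hp2 : p < 2*ℓ*(k+1)) (hq1 : 2*ℓ*k ≤ q) (hq2 : q < 2*ℓ*(k+1)) :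
    BmatE ℓ ν p q = AmatE (ν k) ℓ (p - 2*ℓ*k) (q - 2*ℓ*k) := by
  have m1 : 2*ℓ*(k+1) = 2*ℓ*k + 2*ℓ := by ring
  have hpd : p / (2*ℓ) = k :=
    Nat.div_eq_of_lt_le (by rw [Nat.mul_comm]; omega) (by rw [Nat.mul_comm]; omega)
  have hqd : q / (2*ℓ) = k :=
    Nat.div_eq_of_lt_le (by rw [Nat.mul_comm]; omega) (by rw [Nat.mul_comm]; omega)
  have hpm : p % (2*ℓ) = p - 2*ℓ*k := by
    conv_lhs => rw [show p = 2*ℓ*k + (p - 2*ℓ*k) by omega]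
    rw [Nat.mul_add_mod]; exact Nat.mod_eq_of_lt (by omega)
  have hqm : q % (2*ℓ) = q - 2*ℓ*k := by
    conv_lhs => rw [show q = 2*ℓ*k + (q - 2*ℓ*k) by omega]
    rw [Nat.mul_add_mod]; exact Nat.mod_eq_of_lt (by omega)
  unfold BmatE
  rw [hpd, hqd, if_pos rfl, hpm, hqm]

lemma AmatE_eq_neg_one (n ℓ x y : ℕ) (h1 : x < 2*ℓ-1) (h2 : y < x) : AmatE n ℓ x y = -1 := by
  unfold AmatE SmatE
  rw [if_pos h1, if_pos (by omega), if_neg (by omega), if_pos h2]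

lemma BmatE_col (ℓ : ℕ) (ν : ℕ → ℕ) (k p j : ℕ) (hk : k + 2 ≤ 2*ℓ)
    (hp : p < 2*ℓ*k) (hj1 : 2*ℓ*k ≤ j) (hj2 : j < 2*ℓ*(k+1)) :
    BmatE ℓ ν p (k-1) = BmatE ℓ ν p j := by
  have m1 : 2*ℓ*(k+1) = 2*ℓ*k + 2*ℓ := by ring
  have hk1 : 1 ≤ k := by
    rcases Nat.eq_zero_or_pos k with h | h
    · subst h; simp at hp
    · exact h
  have hjd : j / (2*ℓ) = k :=
    Nat.div_eq_of_lt_le (by rw [Nat.mul_comm]; omega) (by rw [Nat.mul_comm]; omega)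
  have hkd : (k-1) / (2*ℓ) = 0 := Nat.div_eq_of_lt (by omega)
  have hpk : p / (2*ℓ) < k := by
    rw [Nat.div_lt_iff_lt_mul (by omega : 0 < 2*ℓ)]
    rw [Nat.mul_comm]; omega
  by_cases hpl : p < 2*ℓ
  · have hpd : p / (2*ℓ) = 0 := Nat.div_eq_of_lt hpl
    unfold BmatE
    rw [hpd, hkd, hjd, Nat.mod_eq_of_lt hpl, Nat.mod_eq_of_lt (show k-1 < 2*ℓ by omega)]
    split_ifs <;> first | rfl | omega | (exfalso; omega)
  · have hpd : 1 ≤ p / (2*ℓ) := by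
      rw [Nat.le_div_iff_mul_le (by omega : 0 < 2*ℓ)]; omega
    unfold BmatE
    rw [hkd, hjd,
      if_neg (show ¬ p/(2*ℓ) = 0 by omega), if_neg (show ¬ p/(2*ℓ) < 0 by omega),
      if_pos (show k-1 < 2*ℓ by omega),
      if_neg (show ¬ p/(2*ℓ) = k by omega), if_pos hpk, if_neg hpl,
      AmatE_eq_neg_one _ _ _ _ (by omega) (by omega), neg_neg]

lemma AmatE_zero_iff (n ℓ r s : ℕ) (hn : 0 < n) (hn2 : n + 1 ≤ 2*ℓ) (hrs : r < s)
    (hs : s < 2*ℓ) :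
    (AmatE n ℓ r s = 0 ↔ (r = 2*ℓ - 2 ∧ s = 2*ℓ - 1 ∧ Even n)) := by
  have hr1 : r < 2*ℓ - 1 := by omega
  unfold AmatE
  rw [if_pos hr1]
  by_cases hs1 : s < 2*ℓ - 1
  · rw [if_pos hs1]
    unfold SmatE
    rw [if_pos hrs]
    constructor
    · intro h; norm_num at h
    · rintro ⟨-, h2, -⟩; omega
  · rw [if_neg hs1]
    unfold vvecE
    by_cases h1 : r < n
    · rw [if_pos h1]
      constructor
      · intro h; exact absurd h (pow_ne_zero _ (by norm_num))
      · rintro ⟨h2, -, h3⟩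
        rcases h3 with ⟨c, hc⟩
        omega
    · rw [if_neg h1]
      by_cases h2 : r = 2*ℓ - 2 ∧ Even n
      · rw [if_pos h2]
        exact ⟨fun _ => ⟨h2.1, by omega, h2.2⟩, fun _ => rfl⟩
      · rw [if_neg h2]
        constructor
        · intro h; norm_num at h
        · rintro ⟨ha, -, hc⟩; exact absurd ⟨ha, hc⟩ h2

lemma AmatE_zero_iff' (n ℓ p c : ℕ) (hc : c < 2*ℓ - 2) (hp : p < 2*ℓ) :
    (AmatE n ℓ p c = 0 ↔ p = c) := by
  unfold AmatE
  by_cases h1 : p < 2*ℓ - 1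
  · rw [if_pos h1, if_pos (show c < 2*ℓ - 1 by omega)]
    unfold SmatE
    rcases lt_trichotomy p c with h | h | h
    · rw [if_pos h]; constructor
      · intro hh; norm_num at hh
      · omega
    · rw [if_neg (by omega), if_neg (by omega)]; simp [h]
    · rw [if_neg (by omega), if_pos h]; constructor
      · intro hh; norm_num at hh
      · omega
  · rw [if_neg h1, if_pos (show c < 2*ℓ - 1 by omega)]
    unfold vvecE
    split_ifs with h2 h3
    · constructor
      · intro h
        rw [neg_eq_zero] at h
        exact absurd h (pow_ne_zero _ (by norm_num))
      · omega
    · omega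
    · constructor
      · intro h; norm_num at h
      · omega

lemma Bmat_entry (ℓ : ℕ) (ν : ℕ → ℕ) :
    ∀ k, k + 1 ≤ 2 * ℓ → ∀ i j : Fin (2 * ℓ * k), Bmat ℓ ν k i j = BmatE ℓ ν i j := by
  intro k
  induction k with
  | zero =>
    intro _ i j
    have := i.2
    simp at this
  | succ k ih =>
    intro hk i j
    have hl : 0 < 2*ℓ := by omega
    have m1 : 2*ℓ*(k+1) = 2*ℓ*k + 2*ℓ := by ring
    rw [Bmat]
    simp only [Matrix.reindex_apply, Matrix.submatrix_apply, Equiv.symm_trans_apply,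
      finCongr_symm, finCongr_apply]
    by_cases hi : (i : ℕ) < 2*ℓ*k <;> by_cases hj : (j : ℕ) < 2*ℓ*k
    · rw [finsum_left _ (show ((Fin.cast m1 i : Fin (2*ℓ*k + 2*ℓ)) : ℕ) < 2*ℓ*k from hi),
        finsum_left _ (show ((Fin.cast m1 j : Fin (2*ℓ*k + 2*ℓ)) : ℕ) < 2*ℓ*k from hj),
        Matrix.fromBlocks_apply₁₁]
      exact ih (by omega) _ _
    · have hk1 : k - 1 < 2*ℓ*k := by
        have : 0 < 2*ℓ*k := by omega
        have h2 := Nat.le_mul_of_pos_left k hl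
        omega
      rw [finsum_left _ (show ((Fin.cast m1 i : Fin (2*ℓ*k + 2*ℓ)) : ℕ) < 2*ℓ*k from hi),
        finsum_right _ (show 2*ℓ*k ≤ ((Fin.cast m1 j : Fin (2*ℓ*k + 2*ℓ)) : ℕ) by simp only [Fin.coe_cast]; omega),
        Matrix.fromBlocks_apply₁₂]
      show (if h : k - 1 < 2 * ℓ * k then Bmat ℓ ν k ⟨(i:ℕ), hi⟩ ⟨k - 1, h⟩ else 0) = _
      rw [dif_pos hk1, ih (by omega)]
      exact BmatE_col ℓ ν k _ _ (by omega) hi (by omega) j.2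
    · have hk1 : k - 1 < 2*ℓ*k := by
        have : 0 < 2*ℓ*k := by omega
        have h2 := Nat.le_mul_of_pos_left k hl
        omega
      rw [finsum_right _ (show 2*ℓ*k ≤ ((Fin.cast m1 i : Fin (2*ℓ*k + 2*ℓ)) : ℕ) by simp only [Fin.coe_cast]; omega),
        finsum_left _ (show ((Fin.cast m1 j : Fin (2*ℓ*k + 2*ℓ)) : ℕ) < 2*ℓ*k from hj),
        Matrix.fromBlocks_apply₂₁]
      show -(if h : k - 1 < 2 * ℓ * k then Bmat ℓ ν k ⟨(j:ℕ), hj⟩ ⟨k - 1, h⟩ else 0) = _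
      rw [dif_pos hk1, ih (by omega)]
      rw [BmatE_col ℓ ν k _ _ (by omega) hj (by omega) i.2, ← BmatE_anti]
    · rw [finsum_right _ (show 2*ℓ*k ≤ ((Fin.cast m1 i : Fin (2*ℓ*k + 2*ℓ)) : ℕ) by simp only [Fin.coe_cast]; omega),
        finsum_right _ (show 2*ℓ*k ≤ ((Fin.cast m1 j : Fin (2*ℓ*k + 2*ℓ)) : ℕ) by simp only [Fin.coe_cast]; omega),
        Matrix.fromBlocks_apply₂₂]
      show AmatE (ν k) ℓ ((i:ℕ) - 2*ℓ*k) ((j:ℕ) - 2*ℓ*k) = _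
      rw [BmatE_diagblock ℓ ν k _ _ (by omega) (by omega) (by omega) (by omega) (by omega)]

/-- the zero pattern of the matrix `B_{ν,ℓ}` above the diagonal, in 1-based
indexing: for 1-based indices `i < j`, the entry vanishes iff either (a) `i = j'` for some
`j' ∈ {1,…,k-1}` and `j` lies in the block `(2ℓj', 2ℓ(j'+1)]`, or (b) `j = i + 1`,
`i = 2ℓa - 1` for some `a ∈ {1,…,k}`, and `n_a` is even.  Here the 1-based index of
`i : Fin (2ℓk)` is `(i : ℕ) + 1`. -/

theorem Bmat_zero_pattern (k ℓ : ℕ) (ν : ℕ → ℕ) (hk : 0 < k)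
    (hν : ∀ i < k, 0 < ν i) (hℓ : ∀ i < k, ν i + 1 ≤ 2 * ℓ) (hkℓ : k + 1 ≤ 2 * ℓ) :
    ∀ i j : Fin (2 * ℓ * k), (i : ℕ) < (j : ℕ) →
      (Bmat ℓ ν k i j = 0 ↔
        ((∃ j', 1 ≤ j' ∧ j' + 1 ≤ k ∧ (i : ℕ) + 1 = j' ∧
            2 * ℓ * j' < (j : ℕ) + 1 ∧ (j : ℕ) + 1 ≤ 2 * ℓ * (j' + 1)) ∨
         ((j : ℕ) = (i : ℕ) + 1 ∧
          ∃ a, 1 ≤ a ∧ a ≤ k ∧ (i : ℕ) + 2 = 2 * ℓ * a ∧ Even (ν (a - 1))))) := by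
  intro i j hij
  rw [Bmat_entry ℓ ν k hkℓ]
  have hq : (j:ℕ) < 2*ℓ*k := j.2
  have hl : 0 < 2*ℓ := by omega
  obtain ⟨b, s, hs, hqe⟩ : ∃ b s, s < 2*ℓ ∧ (j:ℕ) = 2*ℓ*b + s :=
    ⟨(j:ℕ)/(2*ℓ), (j:ℕ)%(2*ℓ), Nat.mod_lt _ hl, (Nat.div_add_mod _ _).symm⟩
  obtain ⟨a, r, hr, hpe⟩ : ∃ a r, r < 2*ℓ ∧ (i:ℕ) = 2*ℓ*a + r :=
    ⟨(i:ℕ)/(2*ℓ), (i:ℕ)%(2*ℓ), Nat.mod_lt _ hl, (Nat.div_add_mod _ _).symm⟩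
  have hbk : b < k := Nat.lt_of_mul_lt_mul_left (show 2*ℓ*b < 2*ℓ*k by omega)
  have hab : a ≤ b := by
    by_contra h
    have h2 := Nat.mul_le_mul_left (2*ℓ) (show b+1 ≤ a by omega)
    have e : 2*ℓ*(b+1) = 2*ℓ*b + 2*ℓ := by ring
    omega
  have hpd : (i:ℕ)/(2*ℓ) = a := by
    rw [hpe, Nat.mul_add_div hl, Nat.div_eq_of_lt hr]; omega
  have hqd : (j:ℕ)/(2*ℓ) = b := by
    rw [hqe, Nat.mul_add_div hl, Nat.div_eq_of_lt hs]; omega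
  rcases eq_or_lt_of_le hab with heq | hlt
  · -- same block
    subst heq
    have e1 : 2*ℓ*(a+1) = 2*ℓ*a + 2*ℓ := by ring
    rw [BmatE_diagblock ℓ ν a _ _ (by omega) (by omega) (by omega) (by omega) (by omega),
      show (i:ℕ) - 2*ℓ*a = r by omega, show (j:ℕ) - 2*ℓ*a = s by omega,
      AmatE_zero_iff (ν a) ℓ r s (hν a (by omega)) (hℓ a (by omega)) (by omega) hs]
    constructor
    · rintro ⟨h1, h2, h3⟩
      right
      refine ⟨by omega, a+1, by omega, by omega, by omega, ?_⟩
      rwa [Nat.add_sub_cancel]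
    · rintro (⟨j', hj1, hj2, hj3, hj4, hj5⟩ | ⟨h1, a', h2, h3, h4, h5⟩)
      · exfalso
        have e2 : 2*ℓ*(j'+1) = 2*ℓ*j' + 2*ℓ := by ring
        have hja : j' = a := by
          have h6 := Nat.div_eq_of_lt_le (show j'*(2*ℓ) ≤ (j:ℕ) by
              have e3 : j'*(2*ℓ) = 2*ℓ*j' := by ring
              omega)
            (show (j:ℕ) < (j'+1)*(2*ℓ) by
              have e3 : (j'+1)*(2*ℓ) = 2*ℓ*j' + 2*ℓ := by ring
              omega)
          omega
        have haa : a ≤ 2*ℓ*a := Nat.le_mul_of_pos_left a hl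
        omega
      · have ha' : a' = a + 1 := by
          rcases Nat.lt_trichotomy a' (a+1) with h | h | h
          · have := Nat.mul_le_mul_left (2*ℓ) (show a' ≤ a by omega); omega
          · exact h
          · have := Nat.mul_le_mul_left (2*ℓ) (show a+2 ≤ a' by omega)
            have e2 : 2*ℓ*(a+2) = 2*ℓ*a + 2*ℓ + 2*ℓ := by ring
            omega
        subst ha'
        have e2 : 2*ℓ*(a+1) = 2*ℓ*a + 2*ℓ := by ring
        refine ⟨by omega, by omega, ?_⟩
        rwa [Nat.add_sub_cancel] at h5
  · -- cross block
    have hcross : (i:ℕ)/(2*ℓ) < (j:ℕ)/(2*ℓ) := by omega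
    have hval : BmatE ℓ ν i j =
        if (i:ℕ) < 2*ℓ then AmatE (ν 0) ℓ i ((j:ℕ)/(2*ℓ) - 1) else 1 := by
      unfold BmatE
      rw [if_neg (Nat.ne_of_lt hcross), if_pos hcross]
    rw [hval, hqd]
    have e1 : 2*ℓ*(b+1) = 2*ℓ*b + 2*ℓ := by ring
    have hcondB : ¬ ((j:ℕ) = (i:ℕ) + 1 ∧
        ∃ a', 1 ≤ a' ∧ a' ≤ k ∧ (i : ℕ) + 2 = 2 * ℓ * a' ∧ Even (ν (a' - 1))) := by
      rintro ⟨h1, a', h2, h3, h4, h5⟩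
      have h7 := Nat.mul_le_mul_left (2*ℓ) (show a+1 ≤ b by omega)
      have e7 : 2*ℓ*(a+1) = 2*ℓ*a + 2*ℓ := by ring
      rcases le_or_gt a' b with h | h
      · have := Nat.mul_le_mul_left (2*ℓ) h; omega
      · have := Nat.mul_le_mul_left (2*ℓ) (show b+1 ≤ a' by omega); omega
    by_cases hpl : (i:ℕ) < 2*ℓ
    · rw [if_pos hpl, AmatE_zero_iff' (ν 0) ℓ _ _ (show b-1 < 2*ℓ-2 by omega) hpl]
      constructor
      · intro h
        left
        exact ⟨b, by omega, by omega, by omega, by omega, by omega⟩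
      · rintro (⟨j', hj1, hj2, hj3, hj4, hj5⟩ | hB)
        · have e2 : 2*ℓ*(j'+1) = 2*ℓ*j' + 2*ℓ := by ring
          have hja : j' = b := by
            have h6 := Nat.div_eq_of_lt_le (show j'*(2*ℓ) ≤ (j:ℕ) by
                have e3 : j'*(2*ℓ) = 2*ℓ*j' := by ring
                omega)
              (show (j:ℕ) < (j'+1)*(2*ℓ) by
                have e3 : (j'+1)*(2*ℓ) = 2*ℓ*j' + 2*ℓ := by ring
                omega)
            omega
          omega
        · exact absurd hB hcondB
    · rw [if_neg hpl]
      constructor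
      · intro h; norm_num at h
      · rintro (⟨j', hj1, hj2, hj3, hj4, hj5⟩ | hB)
        · exfalso; omega
        · exact absurd hB hcondB
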